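/- There exists a universal constant C such that for any matrices Â, A ∈ ℝ^{n×p}, vectors β*, β̂ ∈ ℝ^p, φ, ε ∈ ℝⁿ with Y = Aβ* + φ + ε and β̂ a minimizer of β ↦ ‖Âβ − Y‖₂², one has ‖Âβ̂ − Aβ*‖₂² ≤ C·max(‖Â − A‖²_{2,∞}‖β*‖₁², ‖φ‖₂², ⟨Â(β̂ − β*), ε⟩). -/

import Mathlib

/-!
Comparing the least-squares objective at `β̂` with its value at `β*` gives the basic inequality
`‖Δ‖² ≤ ‖u‖² + 2⟨Δ - u, φ + ε⟩` for `Δ = Âβ̂ - Aβ*` and `u = (Â - A)β*`, where `Δ - u = Â(β̂ - β*)`.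
The `φ`-part of the cross term is absorbed into `‖Δ‖²` by AM-GM, and `‖u‖₂ ≤ ‖Â - A‖_{2,∞} ‖β*‖₁`
by the triangle inequality over the columns of `Â - A`; this gives the bound with `C = 15`.
-/

open Matrix

/-- ℓ₂ norm of a vector in `ℝⁿ`. -/
noncomputable def l2 {n : ℕ} (v : Fin n → ℝ) : ℝ := Real.sqrt (∑ i, v i ^ 2)

/-- ℓ₁ norm of a vector in `ℝⁿ`. -/
def l1 {n : ℕ} (v : Fin n → ℝ) : ℝ := ∑ i, |v i|

/-- Euclidean inner product on `ℝⁿ`. -/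
def dot {n : ℕ} (u v : Fin n → ℝ) : ℝ := ∑ i, u i * v i

/-- The `(2,∞)` norm of a matrix: maximal ℓ₂ norm of its columns. -/
noncomputable def norm2inf {n p : ℕ} (M : Matrix (Fin n) (Fin p) ℝ) : ℝ :=
  ⨆ j, l2 (fun i => M i j)

open scoped InnerProductSpace

section InnerProductSpace

variable {E : Type*} [NormedAddCommGroup E] [InnerProductSpace ℝ E]

lemma two_inner_le_quarter_norm_sq_add (x y : E) :
    2 * ⟪x, y⟫_ℝ ≤ ‖x‖ ^ 2 / 4 + 4 * ‖y‖ ^ 2 := by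
  nlinarith [real_inner_le_norm x y, sq_nonneg (‖x‖ / 2 - 2 * ‖y‖)]

lemma norm_sq_le_add_two_inner_of_norm_sub_sq_le {x y w : E}
    (h : ‖x - w‖ ^ 2 ≤ ‖y - w‖ ^ 2) : ‖x‖ ^ 2 ≤ ‖y‖ ^ 2 + 2 * ⟪x - y, w⟫_ℝ := by
  rw [norm_sub_sq_real, norm_sub_sq_real] at h
  rw [inner_sub_left]
  linarith

lemma norm_sq_le_of_norm_sub_add_sq_le {x y a b : E}
    (h : ‖x - (a + b)‖ ^ 2 ≤ ‖y - (a + b)‖ ^ 2) :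
    ‖x‖ ^ 2 ≤ 3 * ‖y‖ ^ 2 + 8 * ‖a‖ ^ 2 + 4 * ⟪x - y, b⟫_ℝ := by
  have hbasic := norm_sq_le_add_two_inner_of_norm_sub_sq_le h
  have hamgm := two_inner_le_quarter_norm_sq_add (x - y) a
  have hparallelogram : ‖x - y‖ ^ 2 ≤ 2 * ‖x‖ ^ 2 + 2 * ‖y‖ ^ 2 := by
    nlinarith [parallelogram_law_with_norm ℝ x y, sq_nonneg ‖x + y‖]
  rw [inner_add_right] at hbasic
  linarith

end InnerProductSpace

lemma l2_nonneg {n : ℕ} (v : Fin n → ℝ) : 0 ≤ l2 v := Real.sqrt_nonneg _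

lemma l2_eq_norm_toLp {n : ℕ} (v : Fin n → ℝ) : l2 v = ‖WithLp.toLp 2 v‖ := by
  simp [l2, EuclideanSpace.norm_eq]

lemma dot_eq_inner_toLp {n : ℕ} (u v : Fin n → ℝ) :
    dot u v = ⟪WithLp.toLp 2 u, WithLp.toLp 2 v⟫_ℝ := by
  simp [dot, EuclideanSpace.inner_eq_star_dotProduct, dotProduct, mul_comm]

lemma l2_col_le_norm2inf {n p : ℕ} (B : Matrix (Fin n) (Fin p) ℝ) (j : Fin p) :
    l2 (fun i => B i j) ≤ norm2inf B :=
  le_ciSup (f := fun j => l2 fun i => B i j) (Set.finite_range _).bddAbove j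

lemma l2_mulVec_le {n p : ℕ} (B : Matrix (Fin n) (Fin p) ℝ) (v : Fin p → ℝ) :
    l2 (B *ᵥ v) ≤ norm2inf B * l1 v := by
  have hcols : WithLp.toLp 2 (B *ᵥ v) = ∑ j, v j • WithLp.toLp 2 (fun i => B i j) := by
    ext i
    simp [Matrix.mulVec, dotProduct, mul_comm]
  calc l2 (B *ᵥ v) ≤ ∑ j, ‖v j • WithLp.toLp 2 (fun i => B i j)‖ := by
        rw [l2_eq_norm_toLp, hcols]
        exact norm_sum_le _ _
    _ ≤ ∑ j, |v j| * norm2inf B := by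
        gcongr with j
        rw [norm_smul, Real.norm_eq_abs, ← l2_eq_norm_toLp]
        exact mul_le_mul_of_nonneg_left (l2_col_le_norm2inf B j) (abs_nonneg _)
    _ = norm2inf B * l1 v := by rw [l1, Finset.mul_sum]; simp_rw [mul_comm]

/-- deterministic training error bound: there is a universal constant `C > 0`
such that for all `Â, A, β*, β̂, φ, ε` with `Y = Aβ* + φ + ε` and `β̂` minimizing
`β ↦ ‖Âβ − Y‖₂²`, one has
`‖Âβ̂ − Aβ*‖₂² ≤ C·max(‖Â − A‖²_{2,∞}‖β*‖₁², ‖φ‖₂², ⟨Â(β̂ − β*), ε⟩)`. -/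
theorem training_error_intermediate_bound :
    ∃ C : ℝ, 0 < C ∧
      ∀ (n p : ℕ) (Ahat A : Matrix (Fin n) (Fin p) ℝ)
        (βstar βhat : Fin p → ℝ) (φ ε Y : Fin n → ℝ),
        Y = A *ᵥ βstar + φ + ε →
        (∀ β : Fin p → ℝ, l2 (Ahat *ᵥ βhat - Y) ^ 2 ≤ l2 (Ahat *ᵥ β - Y) ^ 2) →
        l2 (Ahat *ᵥ βhat - A *ᵥ βstar) ^ 2
          ≤ C * max (max (norm2inf (Ahat - A) ^ 2 * l1 βstar ^ 2) (l2 φ ^ 2))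
              (dot (Ahat *ᵥ (βhat - βstar)) ε) := by
  refine ⟨15, by norm_num, fun n p Ahat A βstar βhat φ ε Y hY hopt => ?_⟩
  set M := max (max (norm2inf (Ahat - A) ^ 2 * l1 βstar ^ 2) (l2 φ ^ 2))
    (dot (Ahat *ᵥ (βhat - βstar)) ε)
  have hfit : Ahat *ᵥ βhat - Y = (Ahat *ᵥ βhat - A *ᵥ βstar) - (φ + ε) := by
    rw [hY]; abel
  have hbias : Ahat *ᵥ βstar - Y = (Ahat - A) *ᵥ βstar - (φ + ε) := by
    rw [hY, sub_mulVec]; abel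
  have hdiff : Ahat *ᵥ βhat - A *ᵥ βstar - (Ahat - A) *ᵥ βstar = Ahat *ᵥ (βhat - βstar) := by
    rw [sub_mulVec, mulVec_sub]; abel
  have hmain := norm_sq_le_of_norm_sub_add_sq_le (E := EuclideanSpace ℝ (Fin n))
    (x := WithLp.toLp 2 (Ahat *ᵥ βhat - A *ᵥ βstar)) (y := WithLp.toLp 2 ((Ahat - A) *ᵥ βstar))
    (a := WithLp.toLp 2 φ) (b := WithLp.toLp 2 ε)
    (by simpa only [l2_eq_norm_toLp, hfit, hbias, WithLp.toLp_sub, WithLp.toLp_add]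
      using hopt βstar)
  rw [← WithLp.toLp_sub, hdiff, ← dot_eq_inner_toLp, ← l2_eq_norm_toLp, ← l2_eq_norm_toLp,
    ← l2_eq_norm_toLp] at hmain
  have hbias_le : l2 ((Ahat - A) *ᵥ βstar) ^ 2 ≤ M := by
    calc l2 ((Ahat - A) *ᵥ βstar) ^ 2 ≤ (norm2inf (Ahat - A) * l1 βstar) ^ 2 :=
          pow_le_pow_left₀ (l2_nonneg _) (l2_mulVec_le _ _) 2
      _ ≤ M := by rw [mul_pow]; exact le_max_of_le_left (le_max_left _ _)
  have hφ_le : l2 φ ^ 2 ≤ M := le_max_of_le_left (le_max_right _ _)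
  have hcross_le : dot (Ahat *ᵥ (βhat - βstar)) ε ≤ M := le_max_right _ _
  linarith
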